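/- Let r = q/p be a rational number with 0 < r ≤ 1, p and q relatively prime positive integers. For each positive integer j, define s_j(r) = ⌊j/r⌋₊ − ⌊(j−1)/r⌋₊, where ⌊x⌋₊ denotes the greatest integer strictly less than x. If r̃ is a rational number with 0 < r̃ ≤ 1 and r = r̃/(1 + r̃), then s_j(r) = 1 + s_j(r̃) for every positive integer j. -/

import Mathlib

/-- `sfloor x` is the greatest integer strictly less than `x` (denoted `⌊x⌋₊`). -/
def sfloor (x : ℚ) : ℤ := ⌈x⌉ - 1

/-- The `j`-th term of the S-sequence of a rational `r`:
`s_j(r) = ⌊j(1/r)⌋₊ − ⌊(j−1)(1/r)⌋₊`. -/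
def sj (r : ℚ) (j : ℕ) : ℤ := sfloor ((j : ℚ) * (1 / r)) - sfloor (((j : ℚ) - 1) * (1 / r))

theorem sfloor_add_intCast (x : ℚ) (n : ℤ) : sfloor (x + n) = sfloor x + n := by
  simp only [sfloor, Int.ceil_add_intCast]
  ring

theorem sj_eq_add_of_inv_eq_add_intCast {r rt : ℚ} {m : ℤ} (h : 1 / r = 1 / rt + m) (j : ℕ) :
    sj r j = m + sj rt j := by
  have hj : (j : ℚ) * (1 / r) = (j : ℚ) * (1 / rt) + ((j * m : ℤ) : ℚ) := by
    rw [h]; push_cast; ring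
  have hj' : ((j : ℚ) - 1) * (1 / r) = ((j : ℚ) - 1) * (1 / rt) + (((j - 1) * m : ℤ) : ℚ) := by
    rw [h]; push_cast; ring
  rw [sj, sj, hj, hj', sfloor_add_intCast, sfloor_add_intCast]
  ring

theorem one_div_div_one_add {K : Type*} [DivisionRing K] {x : K} (hx : x ≠ 0) : 1 / (x / (1 + x)) = 1 / x + 1 := by
  rw [one_div_div, add_div, div_self hx, one_div, add_comm]

theorem stmt2_general (r rt : ℚ) (hrt0 : 0 < rt)
    (h : r = rt / (1 + rt)) :
    ∀ j : ℕ, 1 ≤ j → sj r j = 1 + sj rt j := by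
  intro j _
  have hinv : 1 / r = 1 / rt + ((1 : ℤ) : ℚ) := by
    rw [h, one_div_div_one_add hrt0.ne', Int.cast_one]
  exact_mod_cast sj_eq_add_of_inv_eq_add_intCast hinv j

theorem stmt2 (r rt : ℚ) (hr0 : 0 < r) (hr1 : r ≤ 1) (hrt0 : 0 < rt) (hrt1 : rt ≤ 1)
    (h : r = rt / (1 + rt)) :
    ∀ j : ℕ, 1 ≤ j → sj r j = 1 + sj rt j :=
  stmt2_general r rt hrt0 h
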